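/- For every t ≥ 1, the bouquet B_t satisfies: ∂ε_{B_t}(z) = 2^t·z^{t−1} if t is odd, and ∂ε_{B_t}(z) = 2^{t−1}·z^t + 2^{t−1}·z^{t−2} if t is even. -/

import Mathlib

open Polynomial
open scoped Classical

/-- A bouquet (one-vertex ribbon graph) with `n` loops, encoded as a signed chord
diagram on the circle `ZMod (2*n)`: `σ` is a fixed-point-free involution pairing the
two endpoints of each chord, and `t` records which chords are twisted.
(For `n = 0` the data is pinned to a canonical value, since `ZMod 0 = ℤ`.) -/
structure Bouquet (n : ℕ) where
  σ : ZMod (2*n) → ZMod (2*n)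
  invol : ∀ i, σ (σ i) = i
  fpf : ∀ i, σ i ≠ i
  t : ZMod (2*n) → Bool
  t_inv : ∀ i, t (σ i) = t i
  pin_σ : n = 0 → ∀ i, σ i = -(i+1)
  pin_t : n = 0 → ∀ i, t i = false

namespace Bouquet

variable {n : ℕ}

/-- A canonical (planar, all-untwisted) bouquet with `m` chords. -/
def canonical (m : ℕ) : Bouquet m where
  σ := fun x => -(x+1)
  invol := by intro i; ring
  fpf := by
    intro i h
    have h1 : (2 : ZMod (2*m)) * i + 1 = 0 := by linear_combination - h
    have h2 := congrArg (ZMod.castHom (⟨m, rfl⟩ : (2:ℕ) ∣ 2*m) (ZMod 2)) h1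
    rw [map_add, map_mul, map_one, map_zero, map_ofNat] at h2
    have h3 : ((2 : ℕ) : ZMod 2) = 0 := by decide
    simp only [Nat.cast_ofNat] at h3
    rw [h3, zero_mul, zero_add] at h2
    exact one_ne_zero h2
  t := fun _ => false
  t_inv := fun _ => rfl
  pin_σ := fun _ _ => rfl
  pin_t := fun _ _ => rfl

/-- Transport of a bouquet structure along a bijective relabelling of a
`σ`-invariant set of endpoints. -/
def transport {m : ℕ} (hm : m ≠ 0) (B : Bouquet n) (S : Finset (ZMod (2*n)))
    (hS : ∀ i ∈ S, B.σ i ∈ S) (e : ZMod (2*m) ≃ {x : ZMod (2*n) // x ∈ S}) :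
    Bouquet m where
  σ := fun x => e.symm ⟨B.σ (e x), hS _ (e x).2⟩
  invol := by intro x; simp [B.invol]
  fpf := by
    intro x h
    apply B.fpf ((e x : {x // x ∈ S}) : ZMod (2*n))
    have h2 := congrArg (fun y => (e y : {x // x ∈ S})) h
    simp only [Equiv.apply_symm_apply] at h2
    exact congrArg Subtype.val h2
  t := fun x => B.t (e x)
  t_inv := by intro x; simp [B.t_inv]
  pin_σ := fun h0 => absurd h0 hm
  pin_t := fun h0 => absurd h0 hm

/-- The order isomorphism `ZMod M ≃ Fin M` (via `ZMod.val`), for `M ≠ 0`. -/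
def zmodFinEquiv (M : ℕ) [NeZero M] : ZMod M ≃ Fin M where
  toFun x := ⟨x.val, ZMod.val_lt x⟩
  invFun k := (k.val : ZMod M)
  left_inv x := ZMod.natCast_rightInverse x
  right_inv k := by
    ext
    simpa using ZMod.val_cast_of_lt k.isLt

/-- The induced signed chord diagram `B|S` on a `σ`-invariant set `S` of endpoints,
relabelled order-preservingly by `ZMod (2*(S.card/2))`.  (Junk value otherwise.) -/
noncomputable def restrict (B : Bouquet n) (S : Finset (ZMod (2*n))) :
    Bouquet (S.card / 2) :=
  if h : n ≠ 0 ∧ S.card / 2 ≠ 0 ∧ S.card = 2 * (S.card / 2) ∧ ∀ i ∈ S, B.σ i ∈ S then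
    haveI h1 : NeZero (2*n) := ⟨by omega⟩
    haveI h2 : NeZero (2*(S.card/2)) := ⟨by omega⟩
    let E := zmodFinEquiv (2*n)
    let S' : Finset (Fin (2*n)) := S.image E
    have hc : S'.card = 2*(S.card/2) := by
      rw [Finset.card_image_of_injective _ E.injective]; exact h.2.2.1
    transport h.2.1 B S h.2.2.2
      ((zmodFinEquiv (2*(S.card/2))).trans
        ((S'.orderIsoOfFin hc).toEquiv.trans (Equiv.subtypeEquiv E.symm (by
          intro a
          simp only [S', Finset.mem_image]
          constructor
          · rintro ⟨b, hb, rfl⟩; simpa using hb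
          · intro ha; exact ⟨E.symm a, ha, by simp⟩))))
  else canonical (S.card / 2)

/-- The boundary-tracing permutation `Φ` of a bouquet. -/
def Phi (B : Bouquet n) : ZMod (2*n) × Bool → ZMod (2*n) × Bool :=
  fun p =>
    match p with
    | (i, false) => if B.t (i+1) = true then (B.σ (i+1) - 1, true) else (B.σ (i+1), false)
    | (i, true) => if B.t i = true then (B.σ i, false) else (B.σ i - 1, true)

/-- The number of classes of the equivalence relation generated by a relation. -/
noncomputable def relClasses {α : Type*} (r : α → α → Prop) : ℕ :=
  Nat.card (Quotient (Relation.EqvGen.setoid r))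

/-- The number of orbits of (the permutation generated by) a self-map. -/
noncomputable def orbitCount {α : Type*} (f : α → α) : ℕ :=
  relClasses (fun x y => f x = y)

/-- The number of boundary components `f(B)`: half the number of orbits of `Φ`. -/
noncomputable def numBoundary (B : Bouquet n) : ℕ :=
  if n = 0 then 1 else orbitCount (Phi B) / 2

/-- The Euler genus `ε(B) = 1 + n - f(B)`. -/
noncomputable def eulerGenus (B : Bouquet n) : ℕ := 1 + n - numBoundary B

/-- `i` and `j` represent the same chord of `B`. -/
def SameChord (B : Bouquet n) (i j : ZMod (2*n)) : Prop := j = i ∨ j = B.σ i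

/-- The chords through `i` and through `j` interlace: exactly one endpoint of the
chord through `j` lies strictly between the two endpoints of the chord through `i`
(so the four endpoints alternate in the cyclic order). -/
def Interlace (B : Bouquet n) (i j : ZMod (2*n)) : Prop :=
  Xor' (min i.val (B.σ i).val < j.val ∧ j.val < max i.val (B.σ i).val)
       (min i.val (B.σ i).val < (B.σ j).val ∧ (B.σ j).val < max i.val (B.σ i).val)

/-- The partial-dual Euler genus polynomial
`∂ε_B(z) = Σ_{A ⊆ chords(B)} z^(ε(B|A) + ε(B|Aᶜ))`, the sum running over all
(σ-invariant endpoint sets of) sets of chords of `B`. -/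
noncomputable def pdPoly (B : Bouquet n) : Polynomial ℤ :=
  if h : n = 0 then 1 else
    haveI : NeZero (2*n) := ⟨by omega⟩
    ∑ S ∈ Finset.univ.filter (fun S : Finset (ZMod (2*n)) => ∀ i ∈ S, B.σ i ∈ S),
      (Polynomial.X : Polynomial ℤ) ^
        (eulerGenus (B.restrict S) + eulerGenus (B.restrict Sᶜ))


/-- The bouquet `B_t` with signed rotation `(1, 2, …, t, 1, 2, …, t)`:
`σ i = i + t` on `ZMod (2*t)` and all chords untwisted. -/
def Bt (t : ℕ) (ht : t ≠ 0) : Bouquet t where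
  σ := fun i => i + (t : ZMod (2*t))
  invol := by
    intro i
    show i + (t : ZMod (2*t)) + (t : ZMod (2*t)) = i
    have h0 : ((2*t : ℕ) : ZMod (2*t)) = 0 := ZMod.natCast_self _
    push_cast at h0
    linear_combination h0
  fpf := by
    intro i hi
    haveI : NeZero (2*t) := ⟨by omega⟩
    have h2 : (t : ZMod (2*t)) = 0 := by
      have := hi
      simpa using congrArg (fun y => y - i) hi
    rw [ZMod.natCast_eq_zero_iff] at h2
    have := Nat.le_of_dvd (by omega) h2
    omega
  t := fun _ => false
  t_inv := fun _ => rfl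
  pin_σ := fun h0 => absurd h0 ht
  pin_t := fun h0 => absurd h0 ht


section ChordSet

variable {t : ℕ}

/-- The σ-invariant endpoint set of `Bt t` corresponding to a set `A` of chords. -/
noncomputable def chordSet (t : ℕ) (A : Finset (Fin t)) : Finset (ZMod (2*t)) :=
  A.image (fun a => ((a.val : ℕ) : ZMod (2*t))) ∪
    A.image (fun a => ((a.val + t : ℕ) : ZMod (2*t)))

lemma mod_high {t v : ℕ} (h1 : t ≤ v) (h2 : v < 2*t) : v % t = v - t := by
  rw [Nat.mod_eq_sub_mod h1]
  exact Nat.mod_eq_of_lt (by omega)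

/-- The chord index of an endpoint. -/
def chordIdx (ht : t ≠ 0) (z : ZMod (2*t)) : Fin t :=
  ⟨z.val % t, Nat.mod_lt _ (by omega)⟩

lemma val_add_t (ht : t ≠ 0) (z : ZMod (2*t)) :
    haveI : NeZero (2*t) := ⟨by omega⟩
    (z + (t : ZMod (2*t))).val = if z.val < t then z.val + t else z.val - t := by
  haveI : NeZero (2*t) := ⟨by omega⟩
  have hz := ZMod.val_lt z
  rw [ZMod.val_add, ZMod.val_cast_of_lt (by omega)]
  split
  · exact Nat.mod_eq_of_lt (by omega)
  · rw [show z.val + t = (z.val - t) + 1*(2*t) by omega, Nat.add_mul_mod_self_right]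
    exact Nat.mod_eq_of_lt (by omega)

lemma chordIdx_low (ht : t ≠ 0) (a : Fin t) :
    chordIdx ht ((a.val : ℕ) : ZMod (2*t)) = a := by
  haveI : NeZero (2*t) := ⟨by omega⟩
  have ha := a.isLt
  apply Fin.ext
  show ((a.val : ℕ) : ZMod (2*t)).val % t = a.val
  rw [ZMod.val_cast_of_lt (by omega)]
  exact Nat.mod_eq_of_lt ha

lemma chordIdx_high (ht : t ≠ 0) (a : Fin t) :
    chordIdx ht ((a.val + t : ℕ) : ZMod (2*t)) = a := by
  haveI : NeZero (2*t) := ⟨by omega⟩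
  have ha := a.isLt
  apply Fin.ext
  show ((a.val + t : ℕ) : ZMod (2*t)).val % t = a.val
  rw [ZMod.val_cast_of_lt (by omega), mod_high (by omega) (by omega)]
  omega

lemma mem_chordSet (ht : t ≠ 0) (A : Finset (Fin t)) (z : ZMod (2*t)) :
    z ∈ chordSet t A ↔ chordIdx ht z ∈ A := by
  haveI : NeZero (2*t) := ⟨by omega⟩
  simp only [chordSet, Finset.mem_union, Finset.mem_image]
  constructor
  · rintro (⟨a, ha, rfl⟩ | ⟨a, ha, rfl⟩)
    · rwa [chordIdx_low ht a]
    · rwa [chordIdx_high ht a]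
  · intro hmem
    have hz := ZMod.val_lt z
    by_cases hlt : z.val < t
    · left
      refine ⟨chordIdx ht z, hmem, ?_⟩
      show (((chordIdx ht z).val : ℕ) : ZMod (2*t)) = z
      have h1 : (chordIdx ht z).val = z.val := Nat.mod_eq_of_lt hlt
      rw [h1]
      exact ZMod.natCast_rightInverse z
    · right
      refine ⟨chordIdx ht z, hmem, ?_⟩
      show (((chordIdx ht z).val + t : ℕ) : ZMod (2*t)) = z
      have h1 : (chordIdx ht z).val = z.val - t := by
        show z.val % t = z.val - t
        exact mod_high (by omega) (by omega)
      rw [h1, show z.val - t + t = z.val by omega]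
      exact ZMod.natCast_rightInverse z

lemma chordSet_card (ht : t ≠ 0) (A : Finset (Fin t)) :
    (chordSet t A).card = 2 * A.card := by
  haveI : NeZero (2*t) := ⟨by omega⟩
  rw [chordSet, Finset.card_union_of_disjoint, Finset.card_image_of_injective,
    Finset.card_image_of_injective]
  · omega
  · intro a b hab
    have ha := a.isLt
    have hb := b.isLt
    have h1 : ((a.val + t : ℕ) : ZMod (2*t)).val = a.val + t :=
      ZMod.val_cast_of_lt (by omega)
    have h2 : ((b.val + t : ℕ) : ZMod (2*t)).val = b.val + t :=
      ZMod.val_cast_of_lt (by omega)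
    have h3 := congrArg ZMod.val hab
    rw [h1, h2] at h3
    exact Fin.ext (by omega)
  · intro a b hab
    have ha := a.isLt
    have hb := b.isLt
    have h1 : ((a.val : ℕ) : ZMod (2*t)).val = a.val := ZMod.val_cast_of_lt (by omega)
    have h2 : ((b.val : ℕ) : ZMod (2*t)).val = b.val := ZMod.val_cast_of_lt (by omega)
    have h3 := congrArg ZMod.val hab
    rw [h1, h2] at h3
    exact Fin.ext h3
  · rw [Finset.disjoint_left]
    rintro z hz1 hz2
    rw [Finset.mem_image] at hz1 hz2
    obtain ⟨a, _, rfl⟩ := hz1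
    obtain ⟨b, _, hb⟩ := hz2
    have ha := a.isLt
    have hbl := b.isLt
    have h1 : ((a.val : ℕ) : ZMod (2*t)).val = a.val := ZMod.val_cast_of_lt (by omega)
    have h2 : ((b.val + t : ℕ) : ZMod (2*t)).val = b.val + t :=
      ZMod.val_cast_of_lt (by omega)
    have h3 := congrArg ZMod.val hb
    rw [h1, h2] at h3
    omega

lemma chordIdx_add_t (ht : t ≠ 0) (z : ZMod (2*t)) :
    chordIdx ht (z + (t : ZMod (2*t))) = chordIdx ht z := by
  haveI : NeZero (2*t) := ⟨by omega⟩
  have hz := ZMod.val_lt z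
  apply Fin.ext
  show (z + (t : ZMod (2*t))).val % t = z.val % t
  rw [val_add_t ht z]
  split
  · rw [mod_high (by omega) (by omega), Nat.mod_eq_of_lt (by omega)]
    omega
  · rw [Nat.mod_eq_of_lt (by omega), mod_high (by omega) (by omega)]

lemma chordSet_invariant (ht : t ≠ 0) (A : Finset (Fin t)) :
    ∀ z ∈ chordSet t A, z + (t : ZMod (2*t)) ∈ chordSet t A := by
  intro z hz
  rw [mem_chordSet ht] at hz ⊢
  rwa [chordIdx_add_t ht z]

lemma chordSet_compl (ht : t ≠ 0) (A : Finset (Fin t)) :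
    haveI : NeZero (2*t) := ⟨by omega⟩
    (chordSet t A)ᶜ = chordSet t Aᶜ := by
  haveI : NeZero (2*t) := ⟨by omega⟩
  ext z
  rw [Finset.mem_compl, mem_chordSet ht, mem_chordSet ht, Finset.mem_compl]

lemma chordSet_surj (ht : t ≠ 0) (S : Finset (ZMod (2*t)))
    (hS : ∀ z ∈ S, z + (t : ZMod (2*t)) ∈ S) :
    S = chordSet t (Finset.univ.filter
      (fun a : Fin t => ((a.val : ℕ) : ZMod (2*t)) ∈ S)) := by
  haveI : NeZero (2*t) := ⟨by omega⟩
  have hinv : ∀ z : ZMod (2*t), z + (t : ZMod (2*t)) + (t : ZMod (2*t)) = z := by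
    intro z
    have h0 : ((2*t : ℕ) : ZMod (2*t)) = 0 := ZMod.natCast_self _
    push_cast at h0
    linear_combination h0
  ext z
  rw [mem_chordSet ht, Finset.mem_filter]
  simp only [Finset.mem_univ, true_and]
  have hz := ZMod.val_lt z
  by_cases hlt : z.val < t
  · have h1 : ((chordIdx ht z).val : ℕ) = z.val := Nat.mod_eq_of_lt hlt
    rw [h1, show ((z.val : ℕ) : ZMod (2*t)) = z from ZMod.natCast_rightInverse z]
  · have h1 : ((chordIdx ht z).val : ℕ) = z.val - t := by
      show z.val % t = z.val - t
      exact mod_high (by omega) (by omega)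
    have h2 : ((z.val - t : ℕ) : ZMod (2*t)) = z + (t : ZMod (2*t)) := by
      apply ZMod.val_injective
      rw [ZMod.val_cast_of_lt (by omega), val_add_t ht z, if_neg hlt]
    rw [h1, h2]
    constructor
    · exact hS z
    · intro h
      have := hS _ h
      rwa [hinv z] at this

end ChordSet

lemma eqvGen_congr {α β : Type*} (e : α ≃ β) (r : α → α → Prop) (s : β → β → Prop)
    (h : ∀ a b, r a b ↔ s (e a) (e b)) (a b : α) :
    Relation.EqvGen r a b ↔ Relation.EqvGen s (e a) (e b) := by
  constructor
  · intro hg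
    induction hg with
    | rel x y hxy => exact Relation.EqvGen.rel _ _ ((h x y).1 hxy)
    | refl x => exact Relation.EqvGen.refl _
    | symm x y _ ih => exact Relation.EqvGen.symm _ _ ih
    | trans x y z _ _ ih1 ih2 => exact Relation.EqvGen.trans _ _ _ ih1 ih2
  · intro hg
    have key : ∀ x y : β, Relation.EqvGen s x y →
        Relation.EqvGen r (e.symm x) (e.symm y) := by
      intro x y hxy
      induction hxy with
      | rel x y hxy =>
        refine Relation.EqvGen.rel _ _ ((h _ _).2 ?_)
        simpa using hxy
      | refl x => exact Relation.EqvGen.refl _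
      | symm x y _ ih => exact Relation.EqvGen.symm _ _ ih
      | trans x y z _ _ ih1 ih2 => exact Relation.EqvGen.trans _ _ _ ih1 ih2
    simpa using key _ _ hg

lemma relClasses_congr {α β : Type*} (e : α ≃ β) (r : α → α → Prop) (s : β → β → Prop)
    (h : ∀ a b, r a b ↔ s (e a) (e b)) : relClasses r = relClasses s := by
  unfold relClasses
  exact Nat.card_congr (Quotient.congr e (fun a b => eqvGen_congr e r s h a b))

lemma eqvGen_sumMap {α β : Type*} (f : α → α) (g : β → β) (x y : α ⊕ β) :
    Relation.EqvGen (fun x y => Sum.map f g x = y) x y ↔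
      Sum.LiftRel (Relation.EqvGen (fun x y => f x = y))
        (Relation.EqvGen (fun x y => g x = y)) x y := by
  constructor
  · intro hg
    induction hg with
    | rel x y hxy =>
      subst hxy
      cases x with
      | inl a => exact Sum.LiftRel.inl (Relation.EqvGen.rel _ _ rfl)
      | inr b => exact Sum.LiftRel.inr (Relation.EqvGen.rel _ _ rfl)
    | refl x =>
      cases x with
      | inl a => exact Sum.LiftRel.inl (Relation.EqvGen.refl _)
      | inr b => exact Sum.LiftRel.inr (Relation.EqvGen.refl _)
    | symm x y _ ih =>
      cases ih with
      | inl h => exact Sum.LiftRel.inl (Relation.EqvGen.symm _ _ h)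
      | inr h => exact Sum.LiftRel.inr (Relation.EqvGen.symm _ _ h)
    | trans x y z _ _ ih1 ih2 =>
      cases ih1 with
      | inl h1 => cases ih2 with
        | inl h2 => exact Sum.LiftRel.inl (Relation.EqvGen.trans _ _ _ h1 h2)
      | inr h1 => cases ih2 with
        | inr h2 => exact Sum.LiftRel.inr (Relation.EqvGen.trans _ _ _ h1 h2)
  · intro hg
    cases hg with
    | inl h =>
      induction h with
      | rel x y hxy => exact Relation.EqvGen.rel _ _ (by simp [hxy])
      | refl x => exact Relation.EqvGen.refl _
      | symm x y _ ih => exact Relation.EqvGen.symm _ _ ih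
      | trans x y z _ _ ih1 ih2 => exact Relation.EqvGen.trans _ _ _ ih1 ih2
    | inr h =>
      induction h with
      | rel x y hxy => exact Relation.EqvGen.rel _ _ (by simp [hxy])
      | refl x => exact Relation.EqvGen.refl _
      | symm x y _ ih => exact Relation.EqvGen.symm _ _ ih
      | trans x y z _ _ ih1 ih2 => exact Relation.EqvGen.trans _ _ _ ih1 ih2

lemma orbitCount_sumMap {α β : Type*} [Finite α] [Finite β] (f : α → α) (g : β → β) :
    orbitCount (Sum.map f g) = orbitCount f + orbitCount g := by
  unfold orbitCount relClasses
  have e : Quotient (Relation.EqvGen.setoid (fun x y => Sum.map f g x = y)) ≃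
      (Quotient (Relation.EqvGen.setoid (fun x y : α => f x = y)) ⊕
       Quotient (Relation.EqvGen.setoid (fun x y : β => g x = y))) := by
    refine
      { toFun := Quotient.lift
          (fun x => Sum.map (fun a => Quotient.mk _ a) (fun b => Quotient.mk _ b) x) ?_
        invFun := Sum.elim
          (Quotient.lift (fun a => Quotient.mk _ (Sum.inl a)) ?_)
          (Quotient.lift (fun b => Quotient.mk _ (Sum.inr b)) ?_)
        left_inv := ?_
        right_inv := ?_ }
    · intro x y hxy
      have := (eqvGen_sumMap f g x y).1 hxy
      cases this with
      | inl h => exact congrArg Sum.inl (Quotient.sound h)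
      | inr h => exact congrArg Sum.inr (Quotient.sound h)
    · intro a b hab
      exact Quotient.sound ((eqvGen_sumMap f g _ _).2 (Sum.LiftRel.inl hab))
    · intro a b hab
      exact Quotient.sound ((eqvGen_sumMap f g _ _).2 (Sum.LiftRel.inr hab))
    · intro q
      induction q using Quotient.inductionOn with
      | h x => cases x <;> rfl
    · intro q
      cases q with
      | inl q' => induction q' using Quotient.inductionOn with | h x => rfl
      | inr q' => induction q' using Quotient.inductionOn with | h x => rfl
  rw [Nat.card_congr e, Nat.card_sum]

lemma orbitCount_add_const {N : ℕ} [NeZero N] (c : ZMod N) :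
    orbitCount (fun x : ZMod N => x + c) = N / addOrderOf c := by
  unfold orbitCount relClasses
  have hst : Relation.EqvGen.setoid (fun x y : ZMod N => x + c = y) =
      QuotientAddGroup.leftRel (AddSubgroup.zmultiples c) := by
    ext x y
    show Relation.EqvGen _ x y ↔ _
    rw [QuotientAddGroup.leftRel_apply]
    constructor
    · intro hg
      induction hg with
      | rel a b hab => subst hab; simpa using AddSubgroup.mem_zmultiples c
      | refl a => simpa using (AddSubgroup.zmultiples c).zero_mem
      | symm a b _ ih => simpa [neg_add_rev] using (AddSubgroup.zmultiples c).neg_mem ih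
      | trans a b d _ _ ih1 ih2 =>
        have := (AddSubgroup.zmultiples c).add_mem ih1 ih2
        simpa [add_assoc] using this
    · intro hmem
      rw [AddSubgroup.mem_zmultiples_iff] at hmem
      obtain ⟨n, hn⟩ := hmem
      -- reduce to a natural number multiple
      have hNc : (N : ℤ) • c = 0 := by
        simp [ZMod.natCast_self]
      obtain ⟨m, hm⟩ : ∃ m : ℕ, (m : ℤ) • c = n • c := by
        refine ⟨(n % (N : ℤ)).toNat, ?_⟩
        have hN : (0:ℤ) < (N:ℤ) := by exact_mod_cast Nat.pos_of_ne_zero (NeZero.ne N)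
        rw [Int.toNat_of_nonneg (Int.emod_nonneg n (by omega))]
        conv_rhs => rw [← Int.emod_add_mul_ediv n (N : ℤ)]
        rw [add_smul, mul_comm, mul_smul, hNc, smul_zero, add_zero]
      have key : ∀ m : ℕ, Relation.EqvGen (fun x y : ZMod N => x + c = y) x (x + m • c) := by
        intro m
        induction m with
        | zero => simpa using Relation.EqvGen.refl x
        | succ k ih =>
          refine Relation.EqvGen.trans _ _ _ ih (Relation.EqvGen.rel _ _ ?_)
          rw [succ_nsmul, add_assoc]
      have hy : y = x + (m : ℕ) • c := by
        have h3 : x + n • c = y := by rw [hn]; abel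
        rw [← h3, ← hm, natCast_zsmul]
      rw [hy]
      exact key m
  rw [hst]
  have : Nat.card (Quotient (QuotientAddGroup.leftRel (AddSubgroup.zmultiples c))) =
      (AddSubgroup.zmultiples c).index := rfl
  rw [this]
  have h1 := AddSubgroup.card_mul_index (AddSubgroup.zmultiples c)
  rw [Nat.card_zmultiples] at h1
  have h2 : Nat.card (ZMod N) = N := by simp [Nat.card_eq_fintype_card]
  rw [h2] at h1
  have ho : 0 < addOrderOf c := by
    have : IsOfFinAddOrder c := isOfFinAddOrder_of_finite c
    exact this.addOrderOf_pos
  exact (Nat.div_eq_of_eq_mul_right ho h1.symm).symm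


lemma gcd_two_mul_succ (m : ℕ) : Nat.gcd (2*m) (m+1) = if Odd m then 2 else 1 := by
  have hd : Nat.gcd (2*m) (m+1) ∣ 2 := by
    have h1 : Nat.gcd (2*m) (m+1) ∣ 2*(m+1) := (Nat.gcd_dvd_right _ _).mul_left 2
    have h2 : Nat.gcd (2*m) (m+1) ∣ 2*m := Nat.gcd_dvd_left _ _
    have := Nat.dvd_sub h1 h2
    simpa [Nat.mul_succ] using this
  rcases (Nat.dvd_prime Nat.prime_two).1 hd with h | h
  · rw [h]
    have h2 : ¬ (2 ∣ Nat.gcd (2*m) (m+1)) := by rw [h]; omega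
    have : ¬ Odd m := by
      intro hodd
      have hodd2 := Nat.odd_iff.mp hodd
      exact h2 (Nat.dvd_gcd ⟨m, rfl⟩ (by omega))
    simp [this]
  · rw [h]
    have h2 : (2:ℕ) ∣ m + 1 := h ▸ Nat.gcd_dvd_right _ _
    have : Odd m := Nat.odd_iff.mpr (by omega)
    simp [this]

lemma gcd_two_mul_pred (m : ℕ) (hm : m ≠ 0) :
    Nat.gcd (2*m) (m-1) = if Odd m then 2 else 1 := by
  have hd : Nat.gcd (2*m) (m-1) ∣ 2 := by
    have h1 : Nat.gcd (2*m) (m-1) ∣ 2*(m-1) := (Nat.gcd_dvd_right _ _).mul_left 2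
    have h2 : Nat.gcd (2*m) (m-1) ∣ 2*m := Nat.gcd_dvd_left _ _
    have h3 := Nat.dvd_sub h2 h1
    have h4 : 2*m - 2*(m-1) = 2 := by omega
    rwa [h4] at h3
  rcases (Nat.dvd_prime Nat.prime_two).1 hd with h | h
  · rw [h]
    have h2 : ¬ (2 ∣ Nat.gcd (2*m) (m-1)) := by rw [h]; omega
    have : ¬ Odd m := by
      intro hodd
      have hodd2 := Nat.odd_iff.mp hodd
      exact h2 (Nat.dvd_gcd ⟨m, rfl⟩ (by omega))
    simp [this]
  · rw [h]
    have h2 : (2:ℕ) ∣ m - 1 := h ▸ Nat.gcd_dvd_right _ _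
    have : Odd m := Nat.odd_iff.mpr (by omega)
    simp [this]

/-- Helper equivalence collapsing `α × Bool` to a sum. -/
def boolSum {α : Type*} : α × Bool ≃ (α ⊕ α) where
  toFun p := if p.2 then Sum.inr p.1 else Sum.inl p.1
  invFun := Sum.elim (fun x => (x, false)) (fun x => (x, true))
  left_inv := by rintro ⟨x, b⟩; cases b <;> rfl
  right_inv := by rintro (x | x) <;> rfl

@[simp] lemma boolSum_false {α : Type*} (x : α) : boolSum (x, false) = Sum.inl x := rfl
@[simp] lemma boolSum_true {α : Type*} (x : α) : boolSum (x, true) = Sum.inr x := rfl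

lemma orbitCount_add_nat {N : ℕ} (hN : N ≠ 0) (a : ℕ) :
    orbitCount (fun x : ZMod N => x + (a : ZMod N)) = Nat.gcd N a := by
  haveI : NeZero N := ⟨hN⟩
  rw [orbitCount_add_const, ZMod.addOrderOf_coe a hN,
    Nat.div_div_self (Nat.gcd_dvd_left N a) hN]

lemma eulerGenus_rot (m : ℕ) (hm : m ≠ 0) (B : Bouquet m)
    (hσ : ∀ i, B.σ i = i + (m : ZMod (2*m)))
    (htw : ∀ i, B.t i = false) :
    eulerGenus B = if Odd m then m - 1 else m := by
  haveI : NeZero (2*m) := ⟨by omega⟩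
  have hPhiF : ∀ i : ZMod (2*m), Phi B (i, false) = (i + ((m+1 : ℕ) : ZMod (2*m)), false) := by
    intro i
    show (if B.t (i+1) = true then _ else _) = _
    rw [htw]
    simp only [Bool.false_eq_true, if_false, hσ]
    push_cast
    ring_nf
  have hPhiT : ∀ i : ZMod (2*m), Phi B (i, true) = (i + ((m-1 : ℕ) : ZMod (2*m)), true) := by
    intro i
    show (if B.t i = true then _ else _) = _
    rw [htw]
    simp only [Bool.false_eq_true, if_false, hσ]
    rw [Nat.cast_sub (by omega : 1 ≤ m)]
    push_cast
    ring_nf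
  set f : ZMod (2*m) → ZMod (2*m) := fun x => x + ((m+1 : ℕ) : ZMod (2*m)) with hf
  set g : ZMod (2*m) → ZMod (2*m) := fun x => x + ((m-1 : ℕ) : ZMod (2*m)) with hg
  have horb : orbitCount (Phi B) = orbitCount (Sum.map f g) := by
    apply relClasses_congr (boolSum (α := ZMod (2*m)))
    rintro ⟨x, bx⟩ ⟨y, by'⟩
    cases bx <;> cases by' <;>
      simp [hPhiF, hPhiT, Prod.ext_iff, hf, hg]
  have hcount : orbitCount (Phi B) = Nat.gcd (2*m) (m+1) + Nat.gcd (2*m) (m-1) := by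
    rw [horb, orbitCount_sumMap, hf, hg, orbitCount_add_nat (by omega),
      orbitCount_add_nat (by omega)]
  rw [eulerGenus, numBoundary, if_neg hm, hcount, gcd_two_mul_succ, gcd_two_mul_pred m hm]
  rcases Nat.even_or_odd m with he | ho
  · have hno : ¬ Odd m := Nat.not_odd_iff_even.mpr he
    simp only [if_neg hno]
    omega
  · simp only [if_pos ho]
    omega


lemma eulerGenus_of_index_zero {n : ℕ} (B : Bouquet n) (hn : n = 0) : eulerGenus B = 0 := by
  subst hn
  simp [eulerGenus, numBoundary]

lemma mem_image_zmodFin {t : ℕ} (ht : t ≠ 0) (S : Finset (ZMod (2*t))) (u : Fin (2*t)) :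
    haveI : NeZero (2*t) := ⟨by omega⟩
    (u ∈ S.image (zmodFinEquiv (2*t)) ↔ ((u.val : ℕ) : ZMod (2*t)) ∈ S) := by
  haveI : NeZero (2*t) := ⟨by omega⟩
  rw [Finset.mem_image]
  constructor
  · rintro ⟨z, hz, rfl⟩
    have : (((zmodFinEquiv (2*t) z).val : ℕ) : ZMod (2*t)) = z := by
      show ((z.val : ℕ) : ZMod (2*t)) = z
      exact ZMod.natCast_rightInverse z
    rwa [this]
  · intro h
    refine ⟨((u.val : ℕ) : ZMod (2*t)), h, ?_⟩
    apply Fin.ext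
    show (((u.val : ℕ) : ZMod (2*t))).val = u.val
    exact ZMod.val_cast_of_lt u.isLt

lemma chordSet_emb {t : ℕ} (ht : t ≠ 0) (A : Finset (Fin t)) (hA : A.card ≠ 0)
    (hc : haveI : NeZero (2*t) := ⟨by omega⟩
      ((chordSet t A).image (zmodFinEquiv (2*t))).card = 2 * ((chordSet t A).card / 2))
    (j : Fin (2 * ((chordSet t A).card / 2))) :
    haveI : NeZero (2*t) := ⟨by omega⟩
    (((chordSet t A).image (zmodFinEquiv (2*t))).orderEmbOfFin hc j).val =
      (A.orderEmbOfFin rfl ⟨(j : ℕ) % A.card, Nat.mod_lt _ (Nat.pos_of_ne_zero hA)⟩).val +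
        (if (j : ℕ) < A.card then 0 else t) := by
  haveI : NeZero (2*t) := ⟨by omega⟩
  have hcc := chordSet_card ht A
  have key := Finset.orderEmbOfFin_unique hc
    (f := fun j : Fin (2 * ((chordSet t A).card / 2)) =>
      (⟨(A.orderEmbOfFin rfl ⟨(j : ℕ) % A.card, Nat.mod_lt _ (Nat.pos_of_ne_zero hA)⟩).val +
        (if (j : ℕ) < A.card then 0 else t), by
          have := (A.orderEmbOfFin rfl
            ⟨(j : ℕ) % A.card, Nat.mod_lt _ (Nat.pos_of_ne_zero hA)⟩).isLt
          split <;> omega⟩ : Fin (2*t))) ?_ ?_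
  · have := congrArg Fin.val (congrFun key j)
    exact this.symm
  · -- membership
    intro x
    rw [mem_image_zmodFin ht]
    show ((((A.orderEmbOfFin rfl
        ⟨(x : ℕ) % A.card, Nat.mod_lt _ (Nat.pos_of_ne_zero hA)⟩).val +
        (if (x : ℕ) < A.card then 0 else t)) : ℕ) : ZMod (2*t)) ∈ chordSet t A
    by_cases h : (x : ℕ) < A.card
    · rw [if_pos h, Nat.add_zero, mem_chordSet ht, chordIdx_low ht]
      exact Finset.orderEmbOfFin_mem A rfl _
    · rw [if_neg h, mem_chordSet ht, chordIdx_high ht]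
      exact Finset.orderEmbOfFin_mem A rfl _
  · -- strict mono
    intro j1 j2 hlt
    have hj1 := j1.isLt
    have hj2 := j2.isLt
    have hltv : (j1 : ℕ) < (j2 : ℕ) := hlt
    have hmono := (A.orderEmbOfFin (h := rfl)).strictMono
    rw [Fin.mk_lt_mk]
    by_cases h1 : (j1 : ℕ) < A.card <;> by_cases h2 : (j2 : ℕ) < A.card
    · have m1 : (j1 : ℕ) % A.card = (j1 : ℕ) := Nat.mod_eq_of_lt h1
      have m2 : (j2 : ℕ) % A.card = (j2 : ℕ) := Nat.mod_eq_of_lt h2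
      have hv : (A.orderEmbOfFin rfl
          ⟨(j1 : ℕ) % A.card, Nat.mod_lt _ (Nat.pos_of_ne_zero hA)⟩).val <
          (A.orderEmbOfFin rfl
          ⟨(j2 : ℕ) % A.card, Nat.mod_lt _ (Nat.pos_of_ne_zero hA)⟩).val :=
        hmono (by rw [Fin.mk_lt_mk]; omega)
      rw [if_pos h1, if_pos h2]
      omega
    · have hv := (A.orderEmbOfFin rfl
        ⟨(j1 : ℕ) % A.card, Nat.mod_lt _ (Nat.pos_of_ne_zero hA)⟩).isLt
      rw [if_pos h1, if_neg h2]
      omega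
    · omega
    · have m1 : (j1 : ℕ) % A.card = (j1 : ℕ) - A.card := mod_high (by omega) (by omega)
      have m2 : (j2 : ℕ) % A.card = (j2 : ℕ) - A.card := mod_high (by omega) (by omega)
      have hv : (A.orderEmbOfFin rfl
          ⟨(j1 : ℕ) % A.card, Nat.mod_lt _ (Nat.pos_of_ne_zero hA)⟩).val <
          (A.orderEmbOfFin rfl
          ⟨(j2 : ℕ) % A.card, Nat.mod_lt _ (Nat.pos_of_ne_zero hA)⟩).val :=
        hmono (by rw [Fin.mk_lt_mk]; omega)
      rw [if_neg h1, if_neg h2]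
      omega


@[simp] lemma zmodFinEquiv_apply {M : ℕ} [NeZero M] (y : ZMod M) :
    zmodFinEquiv M y = ⟨y.val, ZMod.val_lt y⟩ := rfl

@[simp] lemma zmodFinEquiv_symm_apply {M : ℕ} [NeZero M] (u : Fin M) :
    (zmodFinEquiv M).symm u = ((u.val : ℕ) : ZMod M) := rfl

lemma Bt_sigma (t : ℕ) (ht : t ≠ 0) (z : ZMod (2*t)) :
    (Bt t ht).σ z = z + (t : ZMod (2*t)) := rfl

lemma restrict_chordSet_sigma (t : ℕ) (ht : t ≠ 0) (A : Finset (Fin t)) (hA : A.card ≠ 0) :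
    ∀ x, ((Bt t ht).restrict (chordSet t A)).σ x =
      x + ((((chordSet t A).card / 2 : ℕ)) : ZMod (2*((chordSet t A).card / 2))) := by
  haveI i1 : NeZero (2*t) := ⟨by omega⟩
  have hcc := chordSet_card ht A
  have hmk : (chordSet t A).card / 2 = A.card := by omega
  have hcond : t ≠ 0 ∧ (chordSet t A).card / 2 ≠ 0 ∧
      (chordSet t A).card = 2 * ((chordSet t A).card / 2) ∧
      ∀ i ∈ chordSet t A, (Bt t ht).σ i ∈ chordSet t A :=
    ⟨ht, by omega, by omega, chordSet_invariant ht A⟩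
  have hm0 : (chordSet t A).card / 2 ≠ 0 := hcond.2.1
  haveI i2 : NeZero (2 * ((chordSet t A).card / 2)) := ⟨by omega⟩
  intro x
  have hvx := ZMod.val_lt x
  have hvw := ZMod.val_lt
    (x + ((((chordSet t A).card / 2 : ℕ)) : ZMod (2*((chordSet t A).card / 2))))
  have hadd := val_add_t hm0 x
  unfold restrict
  rw [dif_pos hcond]
  simp only [transport, Equiv.trans_apply]
  rw [Equiv.symm_apply_eq, Subtype.ext_iff]
  simp only [Equiv.trans_apply, Equiv.subtypeEquiv_apply, zmodFinEquiv_apply,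
    zmodFinEquiv_symm_apply, RelIso.coe_fn_toEquiv, Finset.coe_orderIsoOfFin_apply,
    Bt_sigma, chordSet_emb ht A hA]
  by_cases hx : x.val < (chordSet t A).card / 2
  · have hw : (x + ((((chordSet t A).card / 2 : ℕ)) :
        ZMod (2*((chordSet t A).card / 2)))).val = x.val + (chordSet t A).card / 2 := by
      rw [hadd, if_pos hx]
    have hcw : ¬ ((x + ((((chordSet t A).card / 2 : ℕ)) :
        ZMod (2*((chordSet t A).card / 2)))).val < A.card) := by
      rw [hw]; omega
    have hidx : (A.orderEmbOfFin rfl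
        ⟨(x + ((((chordSet t A).card / 2 : ℕ)) :
          ZMod (2*((chordSet t A).card / 2)))).val % A.card,
          Nat.mod_lt _ (Nat.pos_of_ne_zero hA)⟩).val =
        (A.orderEmbOfFin rfl
        ⟨x.val % A.card, Nat.mod_lt _ (Nat.pos_of_ne_zero hA)⟩).val := by
      congr 2
      rw [hw]
      apply Fin.ext
      show (x.val + (chordSet t A).card / 2) % A.card = x.val % A.card
      have m2 : (x.val + A.card) % A.card = x.val % A.card := by
        rw [mod_high (by omega) (by omega), Nat.mod_eq_of_lt (by omega)]
        omega
      have e1 : x.val + (chordSet t A).card / 2 = x.val + A.card := by omega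
      rw [e1, m2]
    rw [hidx, if_pos (show x.val < A.card by omega), if_neg hcw]
    push_cast
    ring
  · have hw : (x + ((((chordSet t A).card / 2 : ℕ)) :
        ZMod (2*((chordSet t A).card / 2)))).val = x.val - (chordSet t A).card / 2 := by
      rw [hadd, if_neg hx]
    have hcw : ((x + ((((chordSet t A).card / 2 : ℕ)) :
        ZMod (2*((chordSet t A).card / 2)))).val < A.card) := by
      rw [hw]; omega
    have hidx : (A.orderEmbOfFin rfl
        ⟨(x + ((((chordSet t A).card / 2 : ℕ)) :
          ZMod (2*((chordSet t A).card / 2)))).val % A.card,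
          Nat.mod_lt _ (Nat.pos_of_ne_zero hA)⟩).val =
        (A.orderEmbOfFin rfl
        ⟨x.val % A.card, Nat.mod_lt _ (Nat.pos_of_ne_zero hA)⟩).val := by
      congr 2
      rw [hw]
      apply Fin.ext
      show (x.val - (chordSet t A).card / 2) % A.card = x.val % A.card
      have m1 : x.val % A.card = x.val - A.card := mod_high (by omega) (by omega)
      have e1 : x.val - (chordSet t A).card / 2 = x.val - A.card := by omega
      rw [e1, Nat.mod_eq_of_lt (by omega), m1]
    rw [hidx, if_neg (show ¬ (x.val < A.card) by omega), if_pos hcw]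
    have h2t : ((2*t : ℕ) : ZMod (2*t)) = 0 := ZMod.natCast_self _
    push_cast at h2t ⊢
    linear_combination h2t

lemma restrict_chordSet_t (t : ℕ) (ht : t ≠ 0) (A : Finset (Fin t)) (hA : A.card ≠ 0) :
    ∀ x, ((Bt t ht).restrict (chordSet t A)).t x = false := by
  haveI i1 : NeZero (2*t) := ⟨by omega⟩
  have hcc := chordSet_card ht A
  have hcond : t ≠ 0 ∧ (chordSet t A).card / 2 ≠ 0 ∧
      (chordSet t A).card = 2 * ((chordSet t A).card / 2) ∧
      ∀ i ∈ chordSet t A, (Bt t ht).σ i ∈ chordSet t A :=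
    ⟨ht, by omega, by omega, chordSet_invariant ht A⟩
  intro x
  unfold restrict
  rw [dif_pos hcond]
  rfl

lemma eulerGenus_restrict_chordSet (t : ℕ) (ht : t ≠ 0) (A : Finset (Fin t)) :
    eulerGenus ((Bt t ht).restrict (chordSet t A)) =
      if A.card = 0 then 0 else if Odd A.card then A.card - 1 else A.card := by
  haveI i1 : NeZero (2*t) := ⟨by omega⟩
  have hcc := chordSet_card ht A
  by_cases hA : A.card = 0
  · rw [if_pos hA]
    exact eulerGenus_of_index_zero _ (by omega)
  · rw [if_neg hA]
    have hg := eulerGenus_rot ((chordSet t A).card / 2) (by omega)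
      ((Bt t ht).restrict (chordSet t A))
      (restrict_chordSet_sigma t ht A hA) (restrict_chordSet_t t ht A hA)
    rw [hg]
    have hmk : (chordSet t A).card / 2 = A.card := by omega
    rw [hmk]


lemma eg_add_odd (t k : ℕ) (h : k ≤ t) (hodd : Odd t) :
    ((if k = 0 then 0 else if Odd k then k-1 else k) +
     (if t-k = 0 then 0 else if Odd (t-k) then t-k-1 else t-k)) = t - 1 := by
  rw [Nat.odd_iff] at hodd
  simp only [Nat.odd_iff]
  split_ifs <;> omega

lemma eg_add_even (t k : ℕ) (h : k ≤ t) (ht : t ≠ 0) (heven : Even t) :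
    ((if k = 0 then 0 else if Odd k then k-1 else k) +
     (if t-k = 0 then 0 else if Odd (t-k) then t-k-1 else t-k)) =
      if Even k then t else t - 2 := by
  rw [Nat.even_iff] at heven
  simp only [Nat.odd_iff, Nat.even_iff]
  split_ifs <;> omega

lemma card_even_filter (t : ℕ) (ht : t ≠ 0) :
    (Finset.univ.filter (fun A : Finset (Fin t) => Even A.card)).card = 2^(t-1) ∧
    (Finset.univ.filter (fun A : Finset (Fin t) => ¬ Even A.card)).card = 2^(t-1) := by
  set E := (Finset.univ.filter (fun A : Finset (Fin t) => Even A.card)).card with hE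
  set O := (Finset.univ.filter (fun A : Finset (Fin t) => ¬ Even A.card)).card with hO
  have htot : E + O = 2^t := by
    rw [hE, hO, Finset.card_filter_add_card_filter_not]
    rw [Finset.card_univ]
    simp [Fintype.card_finset]
  have hzero : (0 : ℤ) = (E : ℤ) - O := by
    have h0 : ∑ A ∈ (Finset.univ : Finset (Fin t)).powerset, (-1 : ℤ)^A.card = 0 := by
      rw [Finset.sum_powerset_neg_one_pow_card]
      simp only [Finset.univ_eq_empty_iff]
      rw [if_neg]
      simp only [not_isEmpty_iff]
      exact ⟨⟨0, by omega⟩⟩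
    rw [Finset.powerset_univ] at h0
    rw [← Finset.sum_filter_add_sum_filter_not Finset.univ
      (fun A : Finset (Fin t) => Even A.card)] at h0
    have he : ∑ A ∈ Finset.univ.filter (fun A : Finset (Fin t) => Even A.card),
        (-1 : ℤ)^A.card = E := by
      rw [Finset.sum_congr rfl (fun A hA => ?_), Finset.sum_const, nsmul_eq_mul, mul_one]
      exact (Finset.mem_filter.mp hA).2.neg_one_pow
    have ho : ∑ A ∈ Finset.univ.filter (fun A : Finset (Fin t) => ¬ Even A.card),
        (-1 : ℤ)^A.card = -O := by
      rw [Finset.sum_congr rfl (fun A hA => ?_), Finset.sum_const, nsmul_eq_mul, mul_neg_one]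
      exact (Nat.not_even_iff_odd.mp (Finset.mem_filter.mp hA).2).neg_one_pow
    rw [he, ho] at h0
    linarith
  have hEO : E = O := by
    have := hzero
    omega
  have hpow : 2^t = 2 * 2^(t-1) := by
    conv_lhs => rw [show t = (t-1)+1 by omega]
    rw [pow_succ]
    ring
  constructor <;> omega


/-- `∂ε_{B_t}(z) = 2^t z^{t-1}` for odd `t`, and
`∂ε_{B_t}(z) = 2^{t-1} z^t + 2^{t-1} z^{t-2}` for even `t`. -/
theorem pdPoly_Bt (t : ℕ) (ht : 1 ≤ t) :
    (Odd t → pdPoly (Bt t (by omega)) = Polynomial.C ((2:ℤ)^t) * Polynomial.X ^ (t-1)) ∧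
    (Even t → pdPoly (Bt t (by omega)) =
      Polynomial.C ((2:ℤ)^(t-1)) * Polynomial.X ^ t
        + Polynomial.C ((2:ℤ)^(t-1)) * Polynomial.X ^ (t-2)) := by
  have ht0 : t ≠ 0 := by omega
  haveI : NeZero (2*t) := ⟨by omega⟩
  have hpd : pdPoly (Bt t (by omega)) =
      ∑ A : Finset (Fin t), (Polynomial.X : Polynomial ℤ) ^
        ((if A.card = 0 then 0 else if Odd A.card then A.card - 1 else A.card) +
         (if Aᶜ.card = 0 then 0 else if Odd Aᶜ.card then Aᶜ.card - 1 else Aᶜ.card)) := by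
    rw [pdPoly, dif_neg ht0]
    refine (Finset.sum_bij' (i := fun (A : Finset (Fin t)) (_ : A ∈ Finset.univ) =>
        chordSet t A)
      (j := fun (S : Finset (ZMod (2*t))) (_ : S ∈ Finset.univ.filter
        (fun S => ∀ i ∈ S, (Bt t (by omega : t ≠ 0)).σ i ∈ S)) =>
        Finset.univ.filter (fun a : Fin t => ((a.val : ℕ) : ZMod (2*t)) ∈ S))
      ?_ ?_ ?_ ?_ ?_).symm
    · intro A _
      rw [Finset.mem_filter]
      exact ⟨Finset.mem_univ _, chordSet_invariant ht0 A⟩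
    · intro S _
      exact Finset.mem_univ _
    · intro A _
      ext a
      rw [Finset.mem_filter]
      rw [mem_chordSet ht0, chordIdx_low ht0]
      simp
    · intro S hS
      exact (chordSet_surj ht0 S (Finset.mem_filter.mp hS).2).symm
    · intro A _
      rw [chordSet_compl ht0, eulerGenus_restrict_chordSet t ht0 A,
        eulerGenus_restrict_chordSet t ht0 Aᶜ]
  have hcompl : ∀ A : Finset (Fin t), Aᶜ.card = t - A.card := by
    intro A
    rw [Finset.card_compl, Fintype.card_fin]
  have hle : ∀ A : Finset (Fin t), A.card ≤ t := by
    intro A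
    have := Finset.card_le_univ A
    simpa [Fintype.card_fin] using this
  have hcard : (Finset.univ : Finset (Finset (Fin t))).card = 2^t := by
    rw [Finset.card_univ, Fintype.card_finset, Fintype.card_fin]
  constructor
  · intro hodd
    rw [hpd]
    have hval : ∀ A : Finset (Fin t),
        (Polynomial.X : Polynomial ℤ) ^
        ((if A.card = 0 then 0 else if Odd A.card then A.card - 1 else A.card) +
         (if Aᶜ.card = 0 then 0 else if Odd Aᶜ.card then Aᶜ.card - 1 else Aᶜ.card)) =
        (Polynomial.X : Polynomial ℤ) ^ (t - 1) := by
      intro A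
      rw [hcompl A, eg_add_odd t A.card (hle A) hodd]
    rw [Finset.sum_congr rfl (fun A _ => hval A), Finset.sum_const, hcard, nsmul_eq_mul]
    congr 1
  · intro heven
    rw [hpd]
    have hval : ∀ A : Finset (Fin t),
        (Polynomial.X : Polynomial ℤ) ^
        ((if A.card = 0 then 0 else if Odd A.card then A.card - 1 else A.card) +
         (if Aᶜ.card = 0 then 0 else if Odd Aᶜ.card then Aᶜ.card - 1 else Aᶜ.card)) =
        if Even A.card then (Polynomial.X : Polynomial ℤ) ^ t
          else (Polynomial.X : Polynomial ℤ) ^ (t - 2) := by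
      intro A
      rw [hcompl A, eg_add_even t A.card (hle A) ht0 heven]
      split_ifs <;> rfl
    rw [Finset.sum_congr rfl (fun A _ => hval A), Finset.sum_ite, Finset.sum_const,
      Finset.sum_const, (card_even_filter t ht0).1, (card_even_filter t ht0).2,
      nsmul_eq_mul, nsmul_eq_mul]
    congr 1 <;> · push_cast; simp [Polynomial.C_pow]

end Bouquet
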